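/- arXiv:1705.06466 — 2 statements merged into one kernel-verified Lean document; each statement's English description precedes it below -/
import Mathlib

section
/- (Lower bound on the differential entropy of a Gaussian mixture.) Let f_A(a) = Σ_{l=1}^L β_l f_l(a) be a mixture of complex Gaussian densities f_l with weights β_l ≥ 0, Σ β_l = 1. Then the differential entropy h(A) = −∫ f_A(a) log₂ f_A(a) da satisfies h(A) ≥ −Σ_{l=1}^L β_l log₂( Σ_{t=1}^L β_t z_{lt} ), where z_{lt} = ∫ f_l(a) f_t(a) da. -/
/-!
Since `f_A log f_A = ∑ β_l f_l log f_A`, Jensen's inequality for the concave `log` against each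
probability density `f_l` gives `∫ f_l log f_A ≤ log ∫ f_l f_A = log ∑_t β_t z_{lt}`.
The integrability this needs comes from squeezing `f_A` between `β_{l₀} f_{l₀}`, for a component
of positive weight, and a constant: `|log f_A|` then grows at most quadratically, which the
Gaussian second moments absorb.
-/

open MeasureTheory Real

section LogJensen

variable {α : Type*} [MeasurableSpace α] {μ : Measure α}

theorem integral_mul_log_le_log_integral_mul {p g : α → ℝ} (hp : ∀ a, 0 ≤ p a)
    (hp1 : ∫ a, p a ∂μ = 1) (hg : ∀ a, 0 < g a) (hpg : Integrable (fun a => p a * g a) μ)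
    (hplog : Integrable (fun a => p a * log (g a)) μ) :
    ∫ a, p a * log (g a) ∂μ ≤ log (∫ a, p a * g a ∂μ) := by
  have hpi : Integrable p μ := Integrable.of_integral_ne_zero (by simp [hp1])
  set c := ∫ a, p a * g a ∂μ
  have hc : 0 < c := by
    have hsupp : Function.support (fun a => p a * g a) = Function.support p := by
      ext a; simp [(hg a).ne']
    rw [integral_pos_iff_support_of_nonneg (fun a => mul_nonneg (hp a) (hg a).le) hpg, hsupp,
      ← integral_pos_iff_support_of_nonneg hp hpi, hp1]
    exact one_pos
  -- `log` lies below its tangent line at `c`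
  have htangent : ∀ a, p a * log (g a) ≤ c⁻¹ * (p a * g a) + (log c - 1) * p a := by
    intro a
    have h := log_le_sub_one_of_pos (div_pos (hg a) hc)
    rw [log_div (hg a).ne' hc.ne'] at h
    calc p a * log (g a) ≤ p a * (g a / c - 1 + log c) :=
          mul_le_mul_of_nonneg_left (by linarith) (hp a)
      _ = c⁻¹ * (p a * g a) + (log c - 1) * p a := by field_simp; ring
  calc ∫ a, p a * log (g a) ∂μ ≤ ∫ a, c⁻¹ * (p a * g a) + (log c - 1) * p a ∂μ :=
        integral_mono hplog ((hpg.const_mul _).add (hpi.const_mul _)) htangent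
    _ = log c := by
        rw [integral_add (hpg.const_mul _) (hpi.const_mul _), integral_const_mul,
          integral_const_mul, hp1, inv_mul_cancel₀ hc.ne']
        ring

theorem integral_mixture_mul_log_le {ι : Type*} [Fintype ι] {β : ι → ℝ} {f : ι → α → ℝ}
    (hβ : ∀ l, 0 ≤ β l) (hf : ∀ l a, 0 ≤ f l a) (hf1 : ∀ l, ∫ a, f l a ∂μ = 1)
    (hpos : ∀ a, 0 < ∑ l, β l * f l a) (hff : ∀ l t, Integrable (fun a => f l a * f t a) μ)
    (hlog : ∀ l, Integrable (fun a => f l a * log (∑ t, β t * f t a)) μ) :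
    ∫ a, (∑ l, β l * f l a) * log (∑ l, β l * f l a) ∂μ ≤
      ∑ l, β l * log (∑ t, β t * ∫ a, f l a * f t a ∂μ) := by
  have hpt : ∀ l a, f l a * ∑ t, β t * f t a = ∑ t, β t * (f l a * f t a) := by
    intro l a; simp only [Finset.mul_sum, mul_left_comm]
  have hcross_int : ∀ l t, Integrable (fun a => β t * (f l a * f t a)) μ :=
    fun l t => (hff l t).const_mul (β t)
  calc ∫ a, (∑ l, β l * f l a) * log (∑ l, β l * f l a) ∂μ
      = ∑ l, β l * ∫ a, f l a * log (∑ t, β t * f t a) ∂μ := by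
        simp_rw [Finset.sum_mul, mul_assoc]
        rw [integral_finsetSum _ fun l _ => (hlog l).const_mul (β l)]
        simp_rw [integral_const_mul]
    _ ≤ ∑ l, β l * log (∫ a, f l a * ∑ t, β t * f t a ∂μ) := by
        gcongr with l
        · exact hβ l
        refine integral_mul_log_le_log_integral_mul (hf l) (hf1 l) hpos ?_ (hlog l)
        simp_rw [hpt]
        exact integrable_finsetSum _ fun t _ => hcross_int l t
    _ = ∑ l, β l * log (∑ t, β t * ∫ a, f l a * f t a ∂μ) := by
        simp_rw [hpt, integral_finsetSum _ fun t _ => hcross_int _ t, integral_const_mul]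

theorem MeasureTheory.Integrable.mul_log_of_exp_le_of_le {p g r : α → ℝ} {C : ℝ}
    (hp : Integrable p μ) (hpr : Integrable (fun a => p a * r a) μ) (hg : Measurable g)
    (hlow : ∀ a, rexp (r a) ≤ g a) (hup : ∀ a, g a ≤ C) :
    Integrable (fun a => p a * log (g a)) μ := by
  refine ((hp.norm.const_mul |log C|).add hpr.norm).mono'
    (hp.1.mul (measurable_log.comp hg).aestronglyMeasurable) (.of_forall fun a => ?_)
  have hga : 0 < g a := (exp_pos _).trans_le (hlow a)
  have hr : r a ≤ log (g a) := (le_log_iff_exp_le hga).2 (hlow a)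
  have hC : log (g a) ≤ log C := log_le_log hga (hup a)
  have hlog : |log (g a)| ≤ |log C| + |r a| := abs_le.2
    ⟨by linarith [neg_abs_le (r a), abs_nonneg (log C)],
      by linarith [le_abs_self (log C), abs_nonneg (r a)]⟩
  simp only [Pi.add_apply, norm_mul, Real.norm_eq_abs]
  calc |p a| * |log (g a)| ≤ |p a| * (|log C| + |r a|) := by gcongr
    _ = |log C| * |p a| + |p a| * |r a| := by ring

end LogJensen

section GaussianMoments

variable {V : Type*} [NormedAddCommGroup V] [InnerProductSpace ℝ V] [FiniteDimensional ℝ V]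
  [MeasurableSpace V] [BorelSpace V]

theorem integrable_rexp_neg_mul_sq_norm {b : ℝ} (hb : 0 < b) :
    Integrable (fun v : V => rexp (-b * ‖v‖ ^ 2)) := by
  refine (GaussianFourier.integrable_cexp_neg_mul_sq_norm_add (V := V) (b := (b : ℂ))
    (by simpa using hb) 0 0).norm.congr (.of_forall fun v => ?_)
  simp [Complex.norm_exp, ← Complex.ofReal_pow]

theorem integrable_sq_norm_mul_rexp_neg_mul_sq_norm {b : ℝ} (hb : 0 < b) :
    Integrable (fun v : V => ‖v‖ ^ 2 * rexp (-b * ‖v‖ ^ 2)) := by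
  refine ((integrable_rexp_neg_mul_sq_norm (half_pos hb)).const_mul (2 / b)).mono'
    (by fun_prop) (.of_forall fun v => ?_)
  -- `y e^{-2y} ≤ e^{-y}` for `y = b ‖v‖² / 2`, because `y ≤ e^y`
  set y := b / 2 * ‖v‖ ^ 2 with hy_def
  have hy : y ≤ rexp y := by linarith [add_one_le_exp y]
  have hsplit : ‖v‖ ^ 2 * rexp (-b * ‖v‖ ^ 2) = 2 / b * (y * rexp (-y) * rexp (-y)) := by
    rw [mul_assoc y, ← exp_add, hy_def]; field_simp; ring_nf
  rw [norm_of_nonneg (by positivity), hsplit]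
  gcongr
  calc y * rexp (-y) * rexp (-y) ≤ rexp y * rexp (-y) * rexp (-y) := by gcongr
    _ = rexp (-(b / 2) * ‖v‖ ^ 2) := by rw [← exp_add, ← exp_add, hy_def]; ring_nf

end GaussianMoments

/-- `v` is the variance, the paper's `σ²`. -/
noncomputable def complexGaussianPDF (m : ℂ) (v : ℝ) (a : ℂ) : ℝ :=
  (π * v)⁻¹ * rexp (-(‖a - m‖) ^ 2 / v)

section ComplexGaussian

variable {m : ℂ} {v : ℝ}

theorem complexGaussianPDF_eq (m : ℂ) (v : ℝ) (a : ℂ) :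
    complexGaussianPDF m v a = (π * v)⁻¹ * rexp (-v⁻¹ * ‖a - m‖ ^ 2) := by
  rw [complexGaussianPDF]; ring_nf

theorem complexGaussianPDF_pos (hv : 0 < v) (a : ℂ) : 0 < complexGaussianPDF m v a := by
  rw [complexGaussianPDF]; positivity

theorem complexGaussianPDF_nonneg (hv : 0 ≤ v) (a : ℂ) : 0 ≤ complexGaussianPDF m v a := by
  rw [complexGaussianPDF]; positivity

theorem complexGaussianPDF_le (hv : 0 ≤ v) (a : ℂ) : complexGaussianPDF m v a ≤ (π * v)⁻¹ := by
  rw [complexGaussianPDF]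
  refine mul_le_of_le_one_right (by positivity) (exp_le_one_iff.2 ?_)
  exact div_nonpos_of_nonpos_of_nonneg (by simp) hv

@[fun_prop]
theorem continuous_complexGaussianPDF (m : ℂ) (v : ℝ) : Continuous (complexGaussianPDF m v) := by
  unfold complexGaussianPDF; fun_prop

theorem integrable_complexGaussianPDF (hv : 0 < v) : Integrable (complexGaussianPDF m v) := by
  simp_rw [funext (complexGaussianPDF_eq m v)]
  exact ((integrable_rexp_neg_mul_sq_norm (inv_pos.2 hv)).comp_sub_right m).const_mul _

theorem integral_complexGaussianPDF (hv : 0 < v) : ∫ a, complexGaussianPDF m v a = 1 := by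
  simp_rw [complexGaussianPDF_eq, integral_const_mul,
    integral_sub_right_eq_self (fun a : ℂ => rexp (-v⁻¹ * ‖a‖ ^ 2)) m,
    GaussianFourier.integral_rexp_neg_mul_sq_norm (inv_pos.2 hv), Complex.finrank_real_complex]
  field_simp
  norm_num

theorem integrable_complexGaussianPDF_mul_sq_norm_sub (hv : 0 < v) (c : ℂ) :
    Integrable (fun a => complexGaussianPDF m v a * ‖a - c‖ ^ 2) := by
  have hmom := ((integrable_sq_norm_mul_rexp_neg_mul_sq_norm (inv_pos.2 hv)).comp_sub_right m
    |>.const_mul (π * v)⁻¹)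
  refine ((hmom.const_mul 2).add ((integrable_complexGaussianPDF (m := m) hv).const_mul
    (2 * ‖m - c‖ ^ 2))).mono' (by fun_prop) (.of_forall fun a => ?_)
  have htri : ‖a - c‖ ^ 2 ≤ 2 * ‖a - m‖ ^ 2 + 2 * ‖m - c‖ ^ 2 := by
    have := norm_sub_le_norm_sub_add_norm_sub a m c
    nlinarith [sq_nonneg (‖a - m‖ - ‖m - c‖), norm_nonneg (a - c)]
  have hpos := complexGaussianPDF_pos (m := m) hv a
  rw [norm_of_nonneg (by positivity)]
  calc complexGaussianPDF m v a * ‖a - c‖ ^ 2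
      ≤ complexGaussianPDF m v a * (2 * ‖a - m‖ ^ 2 + 2 * ‖m - c‖ ^ 2) := by gcongr
    _ = _ := by simp only [Pi.add_apply, complexGaussianPDF_eq]; ring

theorem integrable_complexGaussianPDF_mul_complexGaussianPDF {m' : ℂ} {v' : ℝ} (hv : 0 < v)
    (hv' : 0 ≤ v') :
    Integrable (fun a => complexGaussianPDF m v a * complexGaussianPDF m' v' a) :=
  (integrable_complexGaussianPDF hv).mul_bdd (by fun_prop) (.of_forall fun a => by
    rw [norm_of_nonneg (complexGaussianPDF_nonneg hv' a)]
    exact complexGaussianPDF_le hv' a)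

theorem mul_complexGaussianPDF_eq_exp {b : ℝ} (hb : 0 < b) (hv : 0 < v) (a : ℂ) :
    b * complexGaussianPDF m v a = rexp (log (b * (π * v)⁻¹) - v⁻¹ * ‖a - m‖ ^ 2) := by
  rw [sub_eq_add_neg, exp_add, exp_log (by positivity), complexGaussianPDF_eq]
  ring_nf

end ComplexGaussian

section ComplexGaussianMixture

variable {ι : Type*} [Fintype ι] {β : ι → ℝ} {m : ι → ℂ} {v : ι → ℝ}

theorem mul_complexGaussianPDF_le_sum (hβ : ∀ l, 0 ≤ β l) (hv : ∀ l, 0 ≤ v l) (l₀ : ι) (a : ℂ) :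
    β l₀ * complexGaussianPDF (m l₀) (v l₀) a ≤ ∑ t, β t * complexGaussianPDF (m t) (v t) a :=
  Finset.single_le_sum (fun t _ => mul_nonneg (hβ t) (complexGaussianPDF_nonneg (hv t) a))
    (Finset.mem_univ l₀)

theorem integrable_complexGaussianPDF_mul_log_mixture (hβ : ∀ l, 0 ≤ β l) (hv : ∀ l, 0 < v l)
    {l₀ : ι} (hl₀ : 0 < β l₀) (l : ι) :
    Integrable (fun a => complexGaussianPDF (m l) (v l) a *
      log (∑ t, β t * complexGaussianPDF (m t) (v t) a)) := by
  have hpdf := integrable_complexGaussianPDF (m := m l) (hv l)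
  have hmom := integrable_complexGaussianPDF_mul_sq_norm_sub (m := m l) (hv l) (m l₀)
  -- `r a = log (β l₀ * complexGaussianPDF (m l₀) (v l₀) a)`
  refine hpdf.mul_log_of_exp_le_of_le (C := ∑ t, β t * (π * v t)⁻¹)
    (r := fun a => log (β l₀ * (π * v l₀)⁻¹) - (v l₀)⁻¹ * ‖a - m l₀‖ ^ 2)
    (((hpdf.mul_const (log (β l₀ * (π * v l₀)⁻¹))).sub (hmom.mul_const (v l₀)⁻¹)).congr
      (.of_forall fun a => by simp only [Pi.sub_apply]; ring))
    (by fun_prop : Continuous _).measurable (fun a => ?_) (fun a => ?_)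
  · rw [← mul_complexGaussianPDF_eq_exp hl₀ (hv l₀)]
    exact mul_complexGaussianPDF_le_sum hβ (fun t => (hv t).le) l₀ a
  · exact Finset.sum_le_sum fun t _ =>
      mul_le_mul_of_nonneg_left (complexGaussianPDF_le (hv t).le a) (hβ t)

end ComplexGaussianMixture

theorem entropy_gaussian_mixture_lower_bound_general
    (L : ℕ) (β : Fin L → ℝ) (μ : Fin L → ℂ) (σ : Fin L → ℝ)
    (hβ : ∀ l, 0 ≤ β l) (hβsum : ∑ l, β l = 1) (hσ : ∀ l, 0 < σ l)
    (f : Fin L → ℂ → ℝ)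
    (hf : ∀ l a, f l a = (π * σ l)⁻¹ * Real.exp (-(‖a - μ l‖) ^ 2 / σ l))
    (fA : ℂ → ℝ) (hfA : ∀ a, fA a = ∑ l, β l * f l a) :
    (-∫ a : ℂ, fA a * Real.logb 2 (fA a)) ≥
      -∑ l, β l * Real.logb 2 (∑ t, β t * ∫ a : ℂ, f l a * f t a) := by
  obtain rfl : f = fun l => complexGaussianPDF (μ l) (σ l) := funext₂ hf
  obtain rfl : fA = fun a => ∑ l, β l * complexGaussianPDF (μ l) (σ l) a := funext hfA
  obtain ⟨l₀, -, hl₀⟩ := Finset.exists_ne_zero_of_sum_ne_zero (hβsum ▸ one_ne_zero)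
  have hβl₀ : 0 < β l₀ := (hβ l₀).lt_of_ne' hl₀
  have hjensen := integral_mixture_mul_log_le (f := fun l => complexGaussianPDF (μ l) (σ l)) hβ
    (fun l => complexGaussianPDF_nonneg (hσ l).le) (fun l => integral_complexGaussianPDF (hσ l))
    (fun a => (mul_pos hβl₀ (complexGaussianPDF_pos (hσ l₀) a)).trans_le
      (mul_complexGaussianPDF_le_sum hβ (fun l => (hσ l).le) l₀ a))
    (fun l t => integrable_complexGaussianPDF_mul_complexGaussianPDF (hσ l) (hσ t).le)
    (integrable_complexGaussianPDF_mul_log_mixture hβ hσ hβl₀)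
  simp only [logb, mul_div_assoc', integral_div, ← Finset.sum_div, ge_iff_le, neg_le_neg_iff]
  exact div_le_div_of_nonneg_right hjensen (log_nonneg one_le_two)

/-- Jensen lower bound on the differential entropy of a complex Gaussian mixture. -/
theorem entropy_gaussian_mixture_lower_bound
    (L : ℕ) (hL : 0 < L) (β : Fin L → ℝ) (μ : Fin L → ℂ) (σ : Fin L → ℝ)
    (hβ : ∀ l, 0 ≤ β l) (hβsum : ∑ l, β l = 1) (hσ : ∀ l, 0 < σ l)
    (f : Fin L → ℂ → ℝ)
    (hf : ∀ l a, f l a = (π * σ l)⁻¹ * Real.exp (-(‖a - μ l‖) ^ 2 / σ l))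
    (fA : ℂ → ℝ) (hfA : ∀ a, fA a = ∑ l, β l * f l a) :
    (-∫ a : ℂ, fA a * Real.logb 2 (fA a)) ≥
      -∑ l, β l * Real.logb 2 (∑ t, β t * ∫ a : ℂ, f l a * f t a) :=
  entropy_gaussian_mixture_lower_bound_general L β μ σ hβ hβsum hσ f hf fA hfA
end

section
/- (Concavity-based inner bound comparison.) For positive reals σ_1², …, σ_L², the Jensen lower bound satisfies log₂(πL) − (1/L) Σ_l log₂(Σ_t 1/(σ_l²+σ_t²)) ≤ log₂(π e (1/L) Σ_l σ_l²); i.e., the closed-form lower bound of Proposition 1 never exceeds the maximum-entropy upper bound based on the mixture's second moment. -/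
open Real

/-- The closed-form Jensen lower bound of Proposition 1 never exceeds the
maximum-entropy upper bound based on the mixture's second moment. -/
theorem jensen_lower_bound_le_max_entropy_bound
    (L : ℕ) (hL : 0 < L) (σ : Fin L → ℝ) (hσ : ∀ l, 0 < σ l) :
    Real.logb 2 (π * L) - (1 / L) * ∑ l, Real.logb 2 (∑ t, 1 / (σ l + σ t)) ≤
      Real.logb 2 (π * Real.exp 1 * ((1 / L) * ∑ l, σ l)) := by
  haveI : Nonempty (Fin L) := Fin.pos_iff_nonempty.mp hL
  have hLpos : (0:ℝ) < L := by exact_mod_cast hL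
  have hlog2 : (0:ℝ) < Real.log 2 := Real.log_pos one_lt_two
  set S := ∑ l, σ l with hSdef
  have hS : 0 < S := Finset.sum_pos (fun l _ => hσ l) Finset.univ_nonempty
  -- Step 1: per-index harmonic-arithmetic mean bound
  have h1 : ∀ l : Fin L, 2 * Real.logb 2 L - Real.logb 2 ((L:ℝ) * σ l + S) ≤
      Real.logb 2 (∑ t, 1 / (σ l + σ t)) := by
    intro l
    have hden : 0 < (L:ℝ) * σ l + S := by have := hσ l; positivity
    have hTpos : 0 < ∑ t, 1 / (σ l + σ t) :=
      Finset.sum_pos (fun t _ => by have := hσ l; have := hσ t; positivity)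
        Finset.univ_nonempty
    have hw : ∀ t : Fin L, (0:ℝ) < 1 / (L:ℝ) := fun _ => by positivity
    have hwsum : ∑ _t : Fin L, (1:ℝ) / (L:ℝ) = 1 := by
      simp [Finset.sum_const, Finset.card_univ, mul_one_div]
      field_simp
    have hz : ∀ t : Fin L, 0 < σ l + σ t := fun t => by
      have := hσ l; have := hσ t; positivity
    have hm := Real.harm_mean_le_geom_mean_weighted Finset.univ
      (fun _ : Fin L => 1 / (L:ℝ)) (fun t => σ l + σ t) Finset.univ_nonempty
      (fun t _ => hw t) hwsum (fun t _ => hz t)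
    have gm := Real.geom_mean_le_arith_mean_weighted Finset.univ
      (fun _ : Fin L => 1 / (L:ℝ)) (fun t => σ l + σ t)
      (fun t _ => (hw t).le) hwsum (fun t _ => (hz t).le)
    have hsum1 : ∑ t, (1:ℝ) / (L:ℝ) / (σ l + σ t) = (1 / (L:ℝ)) * ∑ t, 1 / (σ l + σ t) := by
      rw [Finset.mul_sum]; congr 1; ext t; field_simp
    have hsum2 : ∑ t, (1:ℝ) / (L:ℝ) * (σ l + σ t) = (1 / (L:ℝ)) * ((L:ℝ) * σ l + S) := by
      rw [← Finset.mul_sum, Finset.sum_add_distrib, Finset.sum_const, Finset.card_univ,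
        Fintype.card_fin, nsmul_eq_mul]
    have key : ((1 / (L:ℝ)) * ∑ t, 1 / (σ l + σ t))⁻¹ ≤ (1 / (L:ℝ)) * ((L:ℝ) * σ l + S) := by
      calc ((1 / (L:ℝ)) * ∑ t, 1 / (σ l + σ t))⁻¹
          = (∑ t, (1:ℝ) / (L:ℝ) / (σ l + σ t))⁻¹ := by rw [hsum1]
        _ ≤ ∏ t, (σ l + σ t) ^ ((1:ℝ) / (L:ℝ)) := hm
        _ ≤ ∑ t, (1:ℝ) / (L:ℝ) * (σ l + σ t) := gm
        _ = (1 / (L:ℝ)) * ((L:ℝ) * σ l + S) := hsum2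
    -- deduce L^2 / (L σ l + S) ≤ T
    have hineq : (L:ℝ) ^ 2 / ((L:ℝ) * σ l + S) ≤ ∑ t, 1 / (σ l + σ t) := by
      have hmulpos : 0 < (1 / (L:ℝ)) * ∑ t, 1 / (σ l + σ t) := by positivity
      rw [inv_le_iff_one_le_mul₀ hmulpos] at key
      rw [div_le_iff₀ hden]
      have hle := mul_le_mul_of_nonneg_left key (by positivity : (0:ℝ) ≤ (L:ℝ)^2)
      have heq2 : (L:ℝ)^2 * (1 / (L:ℝ) * ((L:ℝ) * σ l + S) * (1 / (L:ℝ) * ∑ t, 1 / (σ l + σ t)))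
          = (∑ t, 1 / (σ l + σ t)) * ((L:ℝ) * σ l + S) := by
        field_simp
      rw [heq2, mul_one] at hle
      exact hle
    calc 2 * Real.logb 2 (L:ℝ) - Real.logb 2 ((L:ℝ) * σ l + S)
        = Real.logb 2 ((L:ℝ) ^ 2 / ((L:ℝ) * σ l + S)) := by
          rw [Real.logb_div (by positivity) hden.ne', Real.logb_pow]
          norm_num
      _ ≤ Real.logb 2 (∑ t, 1 / (σ l + σ t)) :=
          Real.logb_le_logb_of_le one_lt_two (by positivity) hineq
  -- Step 2: Jensen (concavity of log)
  have hwsum : ∑ _l : Fin L, (1:ℝ) / (L:ℝ) = 1 := by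
    simp [Finset.sum_const, Finset.card_univ, mul_one_div]
    field_simp
  have jensen := (strictConcaveOn_log_Ioi.concaveOn).le_map_sum
    (t := Finset.univ) (w := fun _ : Fin L => 1 / (L:ℝ))
    (p := fun l => (L:ℝ) * σ l + S)
    (fun l _ => by positivity) hwsum
    (fun l _ => by have := hσ l; simp only [Set.mem_Ioi]; positivity)
  have hsum2 : ∑ l, (1:ℝ) / (L:ℝ) * ((L:ℝ) * σ l + S) = 2 * S := by
    rw [← Finset.mul_sum, Finset.sum_add_distrib, ← Finset.mul_sum, Finset.sum_const,
      Finset.card_univ, Fintype.card_fin, nsmul_eq_mul]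
    field_simp
    ring
  simp only [smul_eq_mul] at jensen
  rw [hsum2] at jensen
  have h2 : (1 / (L:ℝ)) * ∑ l, Real.logb 2 ((L:ℝ) * σ l + S) ≤ Real.logb 2 (2 * S) := by
    simp only [Real.logb]
    rw [← Finset.sum_div, ← mul_div_assoc]
    apply div_le_div_of_nonneg_right ?_ hlog2.le
    · calc (1 / (L:ℝ)) * ∑ l, Real.log ((L:ℝ) * σ l + S)
          = ∑ l, (1:ℝ) / (L:ℝ) * Real.log ((L:ℝ) * σ l + S) := by rw [Finset.mul_sum]
        _ ≤ Real.log (2 * S) := jensen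
  -- Step 3: assemble
  have hfin : Real.logb 2 (π * L) - 2 * Real.logb 2 L + Real.logb 2 (2 * S) ≤
      Real.logb 2 (π * Real.exp 1 * ((1 / L) * S)) := by
    have hπ := Real.pi_pos
    have heq : Real.logb 2 (π * L) - 2 * Real.logb 2 L + Real.logb 2 (2 * S) =
        Real.logb 2 (π * 2 * S / L) := by
      have hlog : Real.log (π * L) - 2 * Real.log L + Real.log (2 * S) =
          Real.log (π * 2 * S / L) := by
        rw [Real.log_div (by positivity) (by positivity),
          Real.log_mul (by positivity) (by positivity),
          Real.log_mul (by positivity) (by positivity),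
          Real.log_mul (by positivity) (by positivity)]
        rw [Real.log_mul (by positivity) (by positivity)]
        ring
      simp only [Real.logb]
      rw [← hlog]
      ring
    rw [heq]
    apply Real.logb_le_logb_of_le one_lt_two (by positivity)
    have h2e : (2:ℝ) ≤ Real.exp 1 := by
      have := Real.add_one_le_exp 1
      linarith
    have h' : π * 2 * S ≤ π * Real.exp 1 * S := by
      nlinarith [mul_nonneg (mul_nonneg (sub_nonneg.mpr h2e) hπ.le) hS.le]
    calc π * 2 * S / (L:ℝ) ≤ π * Real.exp 1 * S / (L:ℝ) := by gcongr
      _ = π * Real.exp 1 * (1 / (L:ℝ) * S) := by ring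
  -- combine h1 (summed), h2, hfin
  have hsum1 : (1 / (L:ℝ)) * ∑ l, (2 * Real.logb 2 L - Real.logb 2 ((L:ℝ) * σ l + S)) ≤
      (1 / (L:ℝ)) * ∑ l, Real.logb 2 (∑ t, 1 / (σ l + σ t)) := by
    apply mul_le_mul_of_nonneg_left _ (by positivity)
    exact Finset.sum_le_sum (fun l _ => h1 l)
  have hexpand : (1 / (L:ℝ)) * ∑ l, (2 * Real.logb 2 L - Real.logb 2 ((L:ℝ) * σ l + S)) =
      2 * Real.logb 2 L - (1 / (L:ℝ)) * ∑ l, Real.logb 2 ((L:ℝ) * σ l + S) := by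
    rw [Finset.sum_sub_distrib, Finset.sum_const, Finset.card_univ, Fintype.card_fin,
      nsmul_eq_mul, mul_sub]
    congr 1
    field_simp
  rw [hexpand] at hsum1
  linarith
end
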